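/- Suppose a permutation of the multiset A = {(d(i,j), i, j) : (i,j) ∈ D} is split into a prefix L and suffix R with every element of L ≥ every element of R. If after deleting exactly the points of L (with dead-end closure) all points of D become forbidden, then the closed discrete Fréchet distance δ_dcF(U,V) equals d(i,j) for some (d,i,j) ∈ L. -/

import Mathlib

/-- The diagram `D = {1,…,2m} × {1,…,n}`. -/
def Dgm (m n : ℕ) : Set (ℕ × ℕ) :=
  {p | 1 ≤ p.1 ∧ p.1 ≤ 2 * m ∧ 1 ≤ p.2 ∧ p.2 ≤ n}

/-- The wrapped moves north, east and northeast on the diagram: `north (i,j) = (i,j+1)`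
if `j < n` and `(i-m,1)` if `j = n`, `i > m`; `east (i,j) = (i+1,j)` if `i < 2m`;
`northeast (i,j) = (i+1,j+1)` if `i < 2m`, `j < n` and `(i-m+1,1)` if `i ≥ m`, `j = n`;
undefined otherwise. -/
def MoveW (m n : ℕ) (p q : ℕ × ℕ) : Prop :=
  (p.2 < n ∧ q = (p.1, p.2 + 1)) ∨ (p.2 = n ∧ m < p.1 ∧ q = (p.1 - m, 1)) ∨
  (p.1 < 2 * m ∧ q = (p.1 + 1, p.2)) ∨
  (p.1 < 2 * m ∧ p.2 < n ∧ q = (p.1 + 1, p.2 + 1)) ∨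
  (m ≤ p.1 ∧ p.2 = n ∧ q = (p.1 - m + 1, 1))

/-- One unwrapped monotone step: north, east or northeast. -/
def NStep (p q : ℕ × ℕ) : Prop :=
  q = (p.1, p.2 + 1) ∨ q = (p.1 + 1, p.2) ∨ q = (p.1 + 1, p.2 + 1)

/-- A monotone path on the diagram from `(a, 1)` to the virtual point `(m + b, n + 1)`
(which is identified with `(b, 1)`); only the final point may lie on the virtual row. -/
def MonoPath (m n a b : ℕ) (L : List (ℕ × ℕ)) : Prop :=
  L.head? = some (a, 1) ∧ L.getLast? = some (m + b, n + 1) ∧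
  List.Chain' NStep L ∧ ∀ p ∈ L.dropLast, p.2 ≤ n

/-- A forbidden set `F` is closed under the dead-end rule: any point of the diagram all of
whose (wrapped) successors are forbidden or undefined is itself forbidden. -/
def DeadEndClosed (m n : ℕ) (F : Set (ℕ × ℕ)) : Prop :=
  ∀ p ∈ Dgm m n, (∀ q, MoveW m n p q → q ∈ F) → p ∈ F

/-- The maximum of `d` along a path (the final, virtual point is identified with the
starting point and hence excluded). -/
noncomputable def pathVal (d : ℕ × ℕ → ℝ) (L : List (ℕ × ℕ)) : ℝ :=
  (L.dropLast.map d).foldr max 0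

/-- The min-max over wrap-around monotone paths of `d`: the closed discrete Fréchet
distance in its path formulation. -/
noncomputable def dcFpath (m n : ℕ) (d : ℕ × ℕ → ℝ) : ℝ :=
  sInf {x | ∃ i, 1 ≤ i ∧ i ≤ m ∧ ∃ L, MonoPath m n i i L ∧ pathVal d L = x}

/-- The distance function on the doubled diagram:
`dd m u v (i, j) = dist (u i) (v j)` for `i ≤ m` and `dist (u (i - m)) (v j)` for `i > m`. -/
noncomputable def dd {M : Type*} [MetricSpace M] (m : ℕ) (u v : ℕ → M) : ℕ × ℕ → ℝ :=
  fun p => if p.1 ≤ m then dist (u p.1) (v p.2) else dist (u (p.1 - m)) (v p.2)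

/-- The list of all points of the diagram `{1,…,2m} × {1,…,n}`. -/
def gridList (m n : ℕ) : List (ℕ × ℕ) :=
  (List.range' 1 (2 * m)).flatMap fun i => (List.range' 1 n).map fun j => (i, j)

/-!
Every wrap-around monotone path `P` from `(a, 1)` meets `L`. Otherwise `D` minus the points that
`P` visits before its virtual end is a dead-end-closed set containing `L`, hence all of `D` by the
minimality of `F = D`; yet it misses the start `(a, 1)`. It is dead-end closed because every
visited point has a visited successor: the next point of `P`, or `(a, 1)` itself when `P` steps
onto the virtual end `(m + a, n + 1)`.

There are finitely many path values, so an optimal path exists, and its value is `d p` for one of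
its points `p`; it is at least the value of the point of `L` on the path. If `p` comes from `L` we
are done; if it comes from `R`, then `d p` is at most that value, and the two are equal.
-/

theorem List.IsChain.exists_rel_of_mem_dropLast {α : Type*} {R : α → α → Prop} {l : List α}
    (h : l.IsChain R) {a : α} (ha : a ∈ l.dropLast) : ∃ b ∈ l, R a b := by
  obtain ⟨i, hi, rfl⟩ := List.getElem_of_mem ha
  rw [List.length_dropLast] at hi
  exact ⟨l[i + 1], List.getElem_mem _, by simpa using List.isChain_iff_getElem.mp h i (by omega)⟩

theorem List.foldr_max_mem {α : Type*} [LinearOrder α] {l : List α} {b : α} (hl : l ≠ [])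
    (hb : ∀ x ∈ l, b ≤ x) : l.foldr max b ∈ l := by
  induction l with
  | nil => exact absurd rfl hl
  | cons a l ih =>
    rw [List.foldr_cons]
    rcases eq_or_ne l [] with rfl | hne
    · simpa using hb a List.mem_cons_self
    · rcases max_choice a (l.foldr max b) with h | h <;> rw [h]
      · exact List.mem_cons_self
      · exact List.mem_cons_of_mem _ (ih hne fun x hx => hb x (List.mem_cons_of_mem _ hx))

theorem NStep.le {p q : ℕ × ℕ} (h : NStep p q) : p ≤ q := by
  rcases h with rfl | rfl | rfl <;> simp [Prod.le_def]

theorem NStep.moveW {m n : ℕ} {p q : ℕ × ℕ} (h : NStep p q) (hq : q ∈ Dgm m n) :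
    MoveW m n p q := by
  obtain ⟨-, hq1, -, hq2⟩ := hq
  rcases h with rfl | rfl | rfl
  · exact Or.inl ⟨by simpa using hq2, rfl⟩
  · exact Or.inr (Or.inr (Or.inl ⟨by simpa using hq1, rfl⟩))
  · exact Or.inr (Or.inr (Or.inr (Or.inl ⟨by simpa using hq1, by simpa using hq2, rfl⟩)))

theorem NStep.moveW_wrap {m n a : ℕ} {p : ℕ × ℕ} (h : NStep p (m + a, n + 1)) (ha : 1 ≤ a)
    (hp : p.2 ≤ n) : MoveW m n p (a, 1) := by
  obtain ⟨p1, p2⟩ := p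
  simp only [NStep, Prod.mk.injEq] at h hp
  rcases h with ⟨h1, h2⟩ | ⟨-, h2⟩ | ⟨h1, h2⟩
  · exact Or.inr (Or.inl ⟨by omega, by omega, Prod.ext (by dsimp only; omega) rfl⟩)
  · omega
  · refine Or.inr (Or.inr (Or.inr (Or.inr ⟨by omega, by omega, ?_⟩)))
    exact Prod.ext (by dsimp only; omega) rfl

theorem List.IsChain.bounds_of_nstep {c : List (ℕ × ℕ)} (hc : c.IsChain NStep) {s t : ℕ × ℕ}
    (hs : c.head? = some s) (ht : c.getLast? = some t) {p : ℕ × ℕ} (hp : p ∈ c) :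
    s ≤ p ∧ p ≤ t := by
  have hpw : c.Pairwise (· ≤ ·) := (hc.imp fun _ _ => NStep.le).pairwise
  have hne : c ≠ [] := List.ne_nil_of_mem hp
  constructor
  · simpa [(List.head_eq_iff_head?_eq_some hne).mpr hs] using hpw.rel_head hp
  · simpa [(List.getLast_eq_iff_getLast?_eq_some hne).mpr ht] using hpw.rel_getLast hp

theorem exists_nstep_chain (i j : ℕ) (p : ℕ × ℕ) :
    ∃ c : List (ℕ × ℕ), c.head? = some p ∧ c.getLast? = some (p.1 + i, p.2 + j) ∧
      c.IsChain NStep := by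
  induction i generalizing p with
  | succ i ih =>
    obtain ⟨c, hh, hl, hc⟩ := ih (p.1 + 1, p.2)
    refine ⟨p :: c, rfl, ?_, List.isChain_cons.mpr ⟨?_, hc⟩⟩
    · simp only [List.getLast?_cons, hl, Option.getD_some, Option.some.injEq, Prod.mk.injEq,
        and_true]
      omega
    · simp [hh, NStep]
  | zero =>
    induction j generalizing p with
    | zero => exact ⟨[p], by simp⟩
    | succ j ih =>
      obtain ⟨c, hh, hl, hc⟩ := ih (p.1, p.2 + 1)
      refine ⟨p :: c, rfl, ?_, List.isChain_cons.mpr ⟨?_, hc⟩⟩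
      · simp only [List.getLast?_cons, hl, add_zero, Option.getD_some, Option.some.injEq,
          Prod.mk.injEq, true_and]
        omega
      · simp [hh, NStep]

theorem exists_monoPath {m n : ℕ} (hm : 1 ≤ m) (hn : 1 ≤ n) : ∃ P, MonoPath m n 1 1 P := by
  obtain ⟨c, hh, hl, hc⟩ := exists_nstep_chain (m - 1) (n - 1) (1, 1)
  have hcorner : (1 + (m - 1), 1 + (n - 1)) = (m, n) := Prod.ext (by omega) (by omega)
  rw [hcorner] at hl
  refine ⟨c ++ [(m + 1, n + 1)], by simp [List.head?_append, hh], by simp, ?_, ?_⟩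
  · refine hc.append (List.isChain_singleton _) ?_
    simp [hl, NStep]
  · intro p hp
    rw [List.dropLast_concat] at hp
    exact (Prod.le_def.mp (hc.bounds_of_nstep hh hl hp).2).2

namespace MonoPath

variable {m n a b : ℕ} {P : List (ℕ × ℕ)}

theorem bounds (hP : MonoPath m n a b P) {p : ℕ × ℕ} (hp : p ∈ P) :
    (a, 1) ≤ p ∧ p ≤ (m + b, n + 1) :=
  hP.2.2.1.bounds_of_nstep hP.1 hP.2.1 hp

theorem mem_Dgm (hP : MonoPath m n a b P) (ha : 1 ≤ a) (hb : b ≤ m) {p : ℕ × ℕ}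
    (hp : p ∈ P.dropLast) : p ∈ Dgm m n := by
  obtain ⟨hlo, hhi⟩ := hP.bounds (List.mem_of_mem_dropLast hp)
  simp only [Prod.le_def] at hlo hhi
  exact ⟨by omega, by omega, hlo.2, hP.2.2.2 p hp⟩

theorem start_mem_dropLast (hP : MonoPath m n a b P) (hn : 1 ≤ n) : (a, 1) ∈ P.dropLast := by
  refine List.mem_dropLast_of_mem_of_ne_getLast? (List.mem_of_mem_head? hP.1) ?_
  rw [hP.2.1]
  simp only [ne_eq, Option.some.injEq, Prod.mk.injEq, not_and]
  omega

theorem exists_pathVal_eq (hP : MonoPath m n a b P) (hn : 1 ≤ n) {d : ℕ × ℕ → ℝ}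
    (hd : ∀ p, 0 ≤ d p) : ∃ p ∈ P.dropLast, pathVal d P = d p := by
  have hne : P.dropLast.map d ≠ [] :=
    List.map_eq_nil_iff.not.mpr (List.ne_nil_of_mem (hP.start_mem_dropLast hn))
  have hnonneg : ∀ x ∈ P.dropLast.map d, 0 ≤ x := by
    simp only [List.mem_map]
    rintro _ ⟨p, -, rfl⟩
    exact hd p
  obtain ⟨p, hp, hpv⟩ := List.mem_map.mp (List.foldr_max_mem hne hnonneg)
  exact ⟨p, hp, hpv.symm⟩

theorem le_pathVal {d : ℕ × ℕ → ℝ} {p : ℕ × ℕ} (hp : p ∈ P.dropLast) : d p ≤ pathVal d P :=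
  List.le_max_of_le' 0 (List.mem_map_of_mem hp) le_rfl

theorem deadEndClosed_diff (hP : MonoPath m n a a P) (ha : 1 ≤ a) (ham : a ≤ m) (hn : 1 ≤ n) :
    DeadEndClosed m n (Dgm m n \ {p | p ∈ P.dropLast}) := by
  intro p hpD hsucc
  refine ⟨hpD, fun hp => ?_⟩
  obtain ⟨q, hqP, hpq⟩ := hP.2.2.1.exists_rel_of_mem_dropLast hp
  rw [← List.dropLast_append_getLast? _ hP.2.1, List.mem_append, List.mem_singleton] at hqP
  rcases hqP with hq | rfl
  · exact (hsucc q (hpq.moveW (hP.mem_Dgm ha ham hq))).2 hq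
  · exact (hsucc (a, 1) (hpq.moveW_wrap ha (hP.2.2.2 p hp))).2 (hP.start_mem_dropLast hn)

theorem exists_mem_dropLast_of_deadEndClosure_eq (hP : MonoPath m n a a P) (ha : 1 ≤ a)
    (ham : a ≤ m) (hn : 1 ≤ n) {K : Set (ℕ × ℕ)} (hKD : K ⊆ Dgm m n)
    (hK : ∀ G ⊆ Dgm m n, K ⊆ G → DeadEndClosed m n G → Dgm m n ⊆ G) :
    ∃ p ∈ P.dropLast, p ∈ K := by
  by_contra! hmiss
  have hstart : (a, 1) ∈ Dgm m n := ⟨ha, by omega, le_rfl, hn⟩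
  have hall := hK _ Set.sdiff_subset (fun p hp => ⟨hKD hp, fun h => hmiss p h hp⟩)
    (hP.deadEndClosed_diff ha ham hn)
  exact (hall hstart).2 (hP.start_mem_dropLast hn)

end MonoPath

theorem exists_monoPath_pathVal_eq_dcFpath {m n : ℕ} (hm : 1 ≤ m) (hn : 1 ≤ n)
    {d : ℕ × ℕ → ℝ} (hd : ∀ p, 0 ≤ d p) :
    ∃ a, 1 ≤ a ∧ a ≤ m ∧ ∃ P, MonoPath m n a a P ∧ pathVal d P = dcFpath m n d := by
  set S := {x | ∃ a, 1 ≤ a ∧ a ≤ m ∧ ∃ P, MonoPath m n a a P ∧ pathVal d P = x}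
  have hne : S.Nonempty := by
    obtain ⟨P, hP⟩ := exists_monoPath hm hn
    exact ⟨_, 1, le_rfl, hm, P, hP, rfl⟩
  have hfin : S.Finite := by
    have hDgm : (Dgm m n).Finite :=
      ((Set.finite_Icc 1 (2 * m)).prod (Set.finite_Icc 1 n)).subset
        fun p ⟨h1, h2, h3, h4⟩ => ⟨⟨h1, h2⟩, h3, h4⟩
    refine (hDgm.image d).subset ?_
    rintro _ ⟨a, ha, ham, P, hP, rfl⟩
    obtain ⟨p, hp, hpv⟩ := hP.exists_pathVal_eq hn hd
    exact ⟨p, hP.mem_Dgm ha ham hp, hpv.symm⟩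
  exact hne.csInf_mem hfin

theorem mem_gridList {m n : ℕ} {p : ℕ × ℕ} : p ∈ gridList m n ↔ p ∈ Dgm m n := by
  simp only [gridList, List.mem_flatMap, List.mem_map, List.mem_range'_1, Dgm, Set.mem_ofPred_eq]
  constructor
  · rintro ⟨i, hi, j, hj, rfl⟩
    omega
  · rintro ⟨h1, h2, h3, h4⟩
    exact ⟨p.1, by omega, p.2, by omega, rfl⟩

theorem dd_nonneg {M : Type*} [MetricSpace M] (m : ℕ) (u v : ℕ → M) (p : ℕ × ℕ) :
    0 ≤ dd m u v p := by
  unfold dd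
  split_ifs <;> exact dist_nonneg

theorem lemma2_statement2_general {M : Type*} [MetricSpace M]
    (m n : ℕ) (hm : 1 ≤ m) (hn : 1 ≤ n) (u v : ℕ → M)
    (L R : List (ℝ × ℕ × ℕ))
    (hperm : (L ++ R).Perm ((gridList m n).map fun p => (dd m u v p, p.1, p.2)))
    (hLR : ∀ a ∈ L, ∀ b ∈ R, b.1 ≤ a.1)
    (F : Set (ℕ × ℕ))
    (hFmin : ∀ G, G ⊆ Dgm m n → (∀ e ∈ L, (e.2.1, e.2.2) ∈ G) →
      DeadEndClosed m n G → F ⊆ G)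
    (hall : F = Dgm m n) :
    ∃ e ∈ L, dcFpath m n (dd m u v) = e.1 := by
  subst hall
  have hrecord : ∀ e ∈ L ++ R, e.1 = dd m u v e.2 ∧ e.2 ∈ Dgm m n := by
    intro e he
    obtain ⟨p, hp, rfl⟩ := List.mem_map.mp (hperm.mem_iff.mp he)
    exact ⟨rfl, mem_gridList.mp hp⟩
  have hrecorded : ∀ p ∈ Dgm m n, (dd m u v p, p) ∈ L ++ R := fun p hp =>
    hperm.mem_iff.mpr (List.mem_map_of_mem (mem_gridList.mpr hp))
  obtain ⟨a, ha, ham, P, hP, hval⟩ := exists_monoPath_pathVal_eq_dcFpath hm hn (dd_nonneg m u v)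
  obtain ⟨_, hqP, e, heL, rfl⟩ := hP.exists_mem_dropLast_of_deadEndClosure_eq ha ham hn
    (K := {q | ∃ e ∈ L, e.2 = q})
    (by rintro _ ⟨e, he, rfl⟩; exact (hrecord e (List.mem_append_left R he)).2)
    (fun G hGD hKG hG => hFmin G hGD (fun e he => hKG ⟨e, he, rfl⟩) hG)
  have hle : e.1 ≤ dcFpath m n (dd m u v) := by
    rw [(hrecord e (List.mem_append_left R heL)).1, ← hval]
    exact MonoPath.le_pathVal hqP
  obtain ⟨p, hp, hpv⟩ := hP.exists_pathVal_eq hn (dd_nonneg m u v)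
  rw [← hval, hpv] at hle ⊢
  rcases List.mem_append.mp (hrecorded p (hP.mem_Dgm ha ham hp)) with hpL | hpR
  · exact ⟨_, hpL, rfl⟩
  · exact ⟨e, heL, le_antisymm (hLR e heL _ hpR) hle⟩

/-- Statement 2 of Lemma 2: split a permutation of the multiset
`A = {(d(i,j), i, j) : (i,j) ∈ D}` into a prefix `L` and a suffix `R` with every element
of `L` at least every element of `R`. If deleting exactly the points of `L` (together with
the dead-end closure) makes all points of `D` forbidden, then the closed discrete Fréchet
distance is the first component of some element of `L`. -/
theorem lemma2_statement2 {M : Type*} [MetricSpace M]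
    (m n : ℕ) (hm : 1 ≤ m) (hn : 1 ≤ n) (u v : ℕ → M)
    (L R : List (ℝ × ℕ × ℕ))
    (hperm : (L ++ R).Perm ((gridList m n).map fun p => (dd m u v p, p.1, p.2)))
    (hLR : ∀ a ∈ L, ∀ b ∈ R, b.1 ≤ a.1)
    (F : Set (ℕ × ℕ)) (hFD : F ⊆ Dgm m n)
    (hFL : ∀ e ∈ L, (e.2.1, e.2.2) ∈ F)
    (hFclosed : DeadEndClosed m n F)
    (hFmin : ∀ G, G ⊆ Dgm m n → (∀ e ∈ L, (e.2.1, e.2.2) ∈ G) →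
      DeadEndClosed m n G → F ⊆ G)
    (hall : F = Dgm m n) :
    ∃ e ∈ L, dcFpath m n (dd m u v) = e.1 :=
  lemma2_statement2_general m n hm hn u v L R hperm hLR F hFmin hall
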